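/- arXiv:2602.08351 — 3 statements merged into one kernel-verified Lean document; each statement's English description precedes it below -/
import Mathlib

section
/- Let X be a nonempty set, f : X → ℝ, x* ∈ X, and T ≥ 1 a natural number. For each t ∈ {1, …, T} let μ_{t−1}, σ_{t−1} : X → ℝ be functions, β_t ∈ ℝ, and x_t ∈ X. Suppose for every t ∈ {1, …, T}: (i) |μ_{t−1}(x) − f(x)| ≤ β_t·σ_{t−1}(x) for all x ∈ X, and (ii) μ_{t−1}(x_t) + β_t·σ_{t−1}(x_t) ≥ μ_{t−1}(x*) + β_t·σ_{t−1}(x*). Then the cumulative regret satisfies Σ_{t=1}^{T} (f(x*) − f(x_t)) ≤ 2·Σ_{t=1}^{T} β_t·σ_{t−1}(x_t). -/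
/-- Cumulative-regret bound (Eq. 11) in the proof of JoBS's regret theorem. -/
theorem cumulative_regret_bound {X : Type*} [Nonempty X]
    (f : X → ℝ) (xstar : X) (T : ℕ) (hT : 1 ≤ T)
    (μ σ : ℕ → X → ℝ) (β : ℕ → ℝ) (xt : ℕ → X)
    (hconf : ∀ t ∈ Finset.Icc 1 T, ∀ x : X,
      |μ (t - 1) x - f x| ≤ β t * σ (t - 1) x)
    (hacq : ∀ t ∈ Finset.Icc 1 T,
      μ (t - 1) (xt t) + β t * σ (t - 1) (xt t) ≥
        μ (t - 1) xstar + β t * σ (t - 1) xstar) :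
    ∑ t ∈ Finset.Icc 1 T, (f xstar - f (xt t)) ≤
      2 * ∑ t ∈ Finset.Icc 1 T, β t * σ (t - 1) (xt t) := by
  rw [Finset.mul_sum]
  apply Finset.sum_le_sum
  intro t ht
  have h1 := abs_le.mp (hconf t ht (xt t))
  have h2 := abs_le.mp (hconf t ht xstar)
  have h3 := hacq t ht
  nlinarith [h1.1, h1.2, h2.1, h2.2]
end

section
/- Let X be a nonempty set, f : X → ℝ, x* ∈ X, T ≥ 1 a natural number, ℬ ≥ 0, R ≥ 0, c ≥ 0 reals, δ ∈ (0, 1], and γ : ℕ → ℝ nondecreasing with γ(n) ≥ 0 for all n. For t ∈ {1, …, T} define β_t := ℬ + R·√(2·(γ(t−1) + 1 + log(1/δ))), and let μ_{t−1}, σ_{t−1} : X → ℝ and x_t ∈ X satisfy: (i) |μ_{t−1}(x) − f(x)| ≤ β_t·σ_{t−1}(x) for all x ∈ X; (ii) μ_{t−1}(x_t) + β_t·σ_{t−1}(x_t) ≥ μ_{t−1}(x*) + β_t·σ_{t−1}(x*); (iii) σ_{t−1}(x_t) ≥ 0. Suppose further that Σ_{t=1}^{T} σ_{t−1}(x_t)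 ≤ c·√(T·γ(T)). Then Σ_{t=1}^{T} (f(x*) − f(x_t)) ≤ 2·c·√(T·γ(T))·(ℬ + R·√(2·(γ(T) + 1 + log(1/δ)))). -/
/-- Deterministic core of Theorem 1 (Eqs. 11–14) for JoBS's cumulative regret. -/
theorem cumulative_regret_explicit {X : Type*} [Nonempty X]
    (f : X → ℝ) (xstar : X) (T : ℕ) (hT : 1 ≤ T)
    (ℬ R c : ℝ) (hB : 0 ≤ ℬ) (hR : 0 ≤ R) (hc : 0 ≤ c)
    (δ : ℝ) (hδ : δ ∈ Set.Ioc (0 : ℝ) 1)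
    (γ : ℕ → ℝ) (hmono : Monotone γ) (hγ : ∀ n : ℕ, 0 ≤ γ n)
    (μ σ : ℕ → X → ℝ) (xt : ℕ → X) (β : ℕ → ℝ)
    (hβ : ∀ t : ℕ, β t = ℬ + R * Real.sqrt (2 * (γ (t - 1) + 1 + Real.log (1 / δ))))
    (hconf : ∀ t ∈ Finset.Icc 1 T, ∀ x : X,
      |μ (t - 1) x - f x| ≤ β t * σ (t - 1) x)
    (hacq : ∀ t ∈ Finset.Icc 1 T,
      μ (t - 1) (xt t) + β t * σ (t - 1) (xt t) ≥
        μ (t - 1) xstar + β t * σ (t - 1) xstar)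
    (hσ : ∀ t ∈ Finset.Icc 1 T, 0 ≤ σ (t - 1) (xt t))
    (hsum : ∑ t ∈ Finset.Icc 1 T, σ (t - 1) (xt t) ≤ c * Real.sqrt (T * γ T)) :
    ∑ t ∈ Finset.Icc 1 T, (f xstar - f (xt t)) ≤
      2 * c * Real.sqrt (T * γ T) *
        (ℬ + R * Real.sqrt (2 * (γ T + 1 + Real.log (1 / δ)))) := by
  set B : ℝ := ℬ + R * Real.sqrt (2 * (γ T + 1 + Real.log (1 / δ))) with hBdef
  have hlog : 0 ≤ Real.log (1 / δ) := by
    rw [Real.log_div one_ne_zero (ne_of_gt hδ.1), Real.log_one]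
    simp [Real.log_nonpos hδ.1.le hδ.2]
  have hBnn : 0 ≤ B := by positivity
  have hβle : ∀ t ∈ Finset.Icc 1 T, β t ≤ B := by
    intro t ht
    rw [hβ t, hBdef]
    have hγle : γ (t - 1) ≤ γ T := hmono (le_trans (Nat.sub_le t 1) (Finset.mem_Icc.mp ht).2)
    gcongr
  have hβnn : ∀ t : ℕ, 0 ≤ β t := fun t => by rw [hβ t]; positivity
  have key : ∀ t ∈ Finset.Icc 1 T, f xstar - f (xt t) ≤ 2 * B * σ (t - 1) (xt t) := by
    intro t ht
    have h1 := hconf t ht (xt t)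
    have h2 := hconf t ht xstar
    have h3 := hacq t ht
    have hσn := hσ t ht
    have hconf1 := abs_le.mp h1
    have hconf2 := abs_le.mp h2
    have hb : β t * σ (t - 1) (xt t) ≤ B * σ (t - 1) (xt t) :=
      mul_le_mul_of_nonneg_right (hβle t ht) hσn
    nlinarith [hβnn t]
  calc ∑ t ∈ Finset.Icc 1 T, (f xstar - f (xt t))
      ≤ ∑ t ∈ Finset.Icc 1 T, 2 * B * σ (t - 1) (xt t) := Finset.sum_le_sum key
    _ = 2 * B * ∑ t ∈ Finset.Icc 1 T, σ (t - 1) (xt t) := by rw [Finset.mul_sum]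
    _ ≤ 2 * B * (c * Real.sqrt (T * γ T)) := by
        apply mul_le_mul_of_nonneg_left hsum; positivity
    _ = 2 * c * Real.sqrt (T * γ T) * B := by ring
end

section
/- Let X be a nonempty set, f : X → ℝ, x* ∈ X, and let C, B, B_small, k, ℬ, c be reals and N ≥ 1 a natural number with B_small > 0, B ≥ 0, k ≥ 0, ℬ ≥ 0, c ≥ 0, δ ∈ (0, 1], and N·B + B_small < C. Let T := ⌊(C − N·B)/B_small⌋ (so T ≥ 1), set R := k/√N, and let γ : ℕ → ℝ be nondecreasing with γ(n) ≥ 0 for all n. For t ∈ {1, …, T} define β_t := ℬ + R·√(2·(γ(t−1) + 1 + log(1/δ))), and let μ_{t−1}, σ_{t−1} : X → ℝ and x_t ∈ X satisfy: (i) |μ_{t−1}(x) − f(x)| ≤ β_t·σ_{t−1}(x) for all x ∈ X; (ii) μ_{t−1}(x_t) + β_t·σ_{t−1}(x_t) ≥ μ_{t−1}(x*) + β_t·σ_{t−1}(x*); (iii) σ_{t−1}(x_t) ≥ 0; and suppose Σ_{t=1}^{T} σ_{t−1}(x_t) ≤ c·√(T·γ(T)). Then the average regret satisfies (1/T)·Σ_{t=1}^{T}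 (f(x*) − f(x_t)) ≤ 2·c·√(B_small/(C − N·B − B_small)) · √(γ(T)) · (ℬ + (k/√N)·√(2·(γ(T) + 1 + log(1/δ)))). -/
/-- Explicit-constant, deterministic form of Theorem 1 (Eqs. 15–16) for JoBS:
the average regret over the `T = ⌊(C − N·B)/B_small⌋` remaining BO iterations is bounded
by `2·c·√(B_small/(C − N·B − B_small))·√(γ T)·(ℬ + (k/√N)·√(2·(γ T + 1 + log(1/δ))))`. -/
theorem average_regret_jobs {X : Type*} [Nonempty X]
    (f : X → ℝ) (xstar : X)
    (C B Bsmall k ℬ c : ℝ) (N : ℕ) (hN : 1 ≤ N)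
    (hBs : 0 < Bsmall) (hB : 0 ≤ B) (hk : 0 ≤ k) (hℬ : 0 ≤ ℬ) (hc : 0 ≤ c)
    (δ : ℝ) (hδ : δ ∈ Set.Ioc (0 : ℝ) 1)
    (hbudget : (N : ℝ) * B + Bsmall < C)
    (T : ℕ) (hTdef : (T : ℤ) = ⌊(C - (N : ℝ) * B) / Bsmall⌋)
    (R : ℝ) (hRdef : R = k / Real.sqrt N)
    (γ : ℕ → ℝ) (hmono : Monotone γ) (hγ : ∀ n : ℕ, 0 ≤ γ n)
    (μ σ : ℕ → X → ℝ) (xt : ℕ → X) (β : ℕ → ℝ)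
    (hβ : ∀ t : ℕ, β t = ℬ + R * Real.sqrt (2 * (γ (t - 1) + 1 + Real.log (1 / δ))))
    (hconf : ∀ t ∈ Finset.Icc 1 T, ∀ x : X,
      |μ (t - 1) x - f x| ≤ β t * σ (t - 1) x)
    (hacq : ∀ t ∈ Finset.Icc 1 T,
      μ (t - 1) (xt t) + β t * σ (t - 1) (xt t) ≥
        μ (t - 1) xstar + β t * σ (t - 1) xstar)
    (hσ : ∀ t ∈ Finset.Icc 1 T, 0 ≤ σ (t - 1) (xt t))
    (hsum : ∑ t ∈ Finset.Icc 1 T, σ (t - 1) (xt t) ≤ c * Real.sqrt (T * γ T)) :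
    (1 / (T : ℝ)) * ∑ t ∈ Finset.Icc 1 T, (f xstar - f (xt t)) ≤
      2 * c * Real.sqrt (Bsmall / (C - (N : ℝ) * B - Bsmall)) * Real.sqrt (γ T) *
        (ℬ + (k / Real.sqrt N) *
          Real.sqrt (2 * (γ T + 1 + Real.log (1 / δ)))) := by
  obtain ⟨hδ0, hδ1⟩ := hδ
  have hL : 0 ≤ Real.log (1 / δ) := by
    apply Real.log_nonneg
    rw [le_div_iff₀ hδ0]; linarith
  have hR : 0 ≤ R := by
    rw [hRdef]; exact div_nonneg hk (Real.sqrt_nonneg _)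
  set L := Real.log (1 / δ) with hLdef
  set βmax : ℝ := ℬ + R * Real.sqrt (2 * (γ T + 1 + L)) with hβm
  have hβmax : 0 ≤ βmax := by
    have := Real.sqrt_nonneg (2 * (γ T + 1 + L))
    positivity
  -- β t ≤ βmax for t ≤ T
  have hβle : ∀ t ∈ Finset.Icc 1 T, β t ≤ βmax := by
    intro t ht
    rw [hβ t, hβm]
    have htT : t - 1 ≤ T := le_trans (Nat.sub_le t 1) (Finset.mem_Icc.mp ht).2
    have : γ (t - 1) ≤ γ T := hmono htT
    have hs : Real.sqrt (2 * (γ (t-1) + 1 + L)) ≤ Real.sqrt (2 * (γ T + 1 + L)) :=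
      Real.sqrt_le_sqrt (by linarith)
    nlinarith
  -- per-step regret bound
  have hstep : ∀ t ∈ Finset.Icc 1 T, f xstar - f (xt t) ≤ 2 * βmax * σ (t-1) (xt t) := by
    intro t ht
    have h1 := abs_le.mp (hconf t ht xstar)
    have h2 := abs_le.mp (hconf t ht (xt t))
    have h3 := hacq t ht
    have h4 := hσ t ht
    have h5 : β t ≤ βmax := hβle t ht
    have hβt : 0 ≤ β t := by
      rw [hβ t]
      have := Real.sqrt_nonneg (2 * (γ (t-1) + 1 + L))
      positivity
    nlinarith [mul_le_mul_of_nonneg_right h5 h4]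
  have hT1 : 1 ≤ T := by
    have : (1 : ℤ) ≤ (T : ℤ) := by
      rw [hTdef]
      apply Int.le_floor.mpr
      rw [Int.cast_one, le_div_iff₀ hBs]; linarith
    exact_mod_cast this
  have hTpos : (0 : ℝ) < (T : ℝ) := by exact_mod_cast Nat.lt_of_lt_of_le Nat.zero_lt_one hT1
  have hD : 0 < C - (N : ℝ) * B - Bsmall := by linarith
  have hTB : C - (N : ℝ) * B - Bsmall ≤ (T : ℝ) * Bsmall := by
    have hfl : (C - (N : ℝ) * B) / Bsmall - 1 < (T : ℝ) := by
      have := Int.sub_one_lt_floor ((C - (N : ℝ) * B) / Bsmall)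
      have hc' : ((⌊(C - (N : ℝ) * B) / Bsmall⌋ : ℤ) : ℝ) = (T : ℝ) := by
        rw [← hTdef]; norm_cast
      linarith [hc' ▸ this]
    have := (div_lt_iff₀ hBs).mp (by linarith : (C - (N : ℝ) * B) / Bsmall < (T : ℝ) + 1)
    nlinarith
  -- sum bound
  have hsum2 : ∑ t ∈ Finset.Icc 1 T, (f xstar - f (xt t)) ≤
      2 * βmax * (c * Real.sqrt ((T : ℝ) * γ T)) := by
    calc ∑ t ∈ Finset.Icc 1 T, (f xstar - f (xt t))
        ≤ ∑ t ∈ Finset.Icc 1 T, 2 * βmax * σ (t-1) (xt t) := Finset.sum_le_sum hstep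
      _ = 2 * βmax * ∑ t ∈ Finset.Icc 1 T, σ (t-1) (xt t) := by rw [Finset.mul_sum]
      _ ≤ 2 * βmax * (c * Real.sqrt ((T : ℝ) * γ T)) := by
          apply mul_le_mul_of_nonneg_left hsum (by linarith)
  -- arithmetic finish
  have hsqrtT : Real.sqrt ((T : ℝ) * γ T) = Real.sqrt T * Real.sqrt (γ T) :=
    Real.sqrt_mul (le_of_lt hTpos) _
  have hinv : Real.sqrt (T : ℝ) / (T : ℝ) ≤ Real.sqrt (Bsmall / (C - (N : ℝ) * B - Bsmall)) := by
    have hsT : 0 < Real.sqrt (T : ℝ) := Real.sqrt_pos.mpr hTpos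
    have h1 : Real.sqrt (T : ℝ) / (T : ℝ) = Real.sqrt (1 / (T : ℝ)) := by
      rw [one_div, Real.sqrt_inv]
      rw [eq_comm, inv_eq_iff_eq_inv, eq_comm, inv_div, div_eq_iff hsT.ne']
      exact (Real.mul_self_sqrt (le_of_lt hTpos)).symm
    rw [h1]
    apply Real.sqrt_le_sqrt
    rw [div_le_div_iff₀ hTpos hD]
    nlinarith
  calc (1 / (T : ℝ)) * ∑ t ∈ Finset.Icc 1 T, (f xstar - f (xt t))
      ≤ (1 / (T : ℝ)) * (2 * βmax * (c * Real.sqrt ((T : ℝ) * γ T))) := by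
        apply mul_le_mul_of_nonneg_left hsum2 (by positivity)
    _ = 2 * c * (Real.sqrt (T : ℝ) / (T : ℝ)) * Real.sqrt (γ T) * βmax := by
        rw [hsqrtT]; ring
    _ ≤ 2 * c * Real.sqrt (Bsmall / (C - (N : ℝ) * B - Bsmall)) * Real.sqrt (γ T) * βmax := by
        gcongr
    _ = 2 * c * Real.sqrt (Bsmall / (C - (N : ℝ) * B - Bsmall)) * Real.sqrt (γ T) *
        (ℬ + (k / Real.sqrt N) * Real.sqrt (2 * (γ T + 1 + Real.log (1 / δ)))) := by
        rw [hβm, hRdef]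
end
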